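/- arXiv:2302.14351 — 3 statements merged into one kernel-verified Lean document; each statement's English description precedes it below -/
import Mathlib

section
/- Let [X,B,m,ν] be a reversible random walk space and let Ω ∈ B be such that Ω and Ω_m are m-connected and 0 < ν(Ω) < ν(Ω_m) < ∞. Then 0 < P_m(Ω) < ν(Ω). -/
open MeasureTheory ENNReal Filter Topology

namespace RandomWalkSpace

variable {X : Type*} [MeasurableSpace X]

/-- A random walk: a family of probability measures `m x`, measurably depending on `x`. -/
def IsRandomWalk (m : X → Measure X) : Prop :=
  (∀ x, IsProbabilityMeasure (m x)) ∧
    ∀ A : Set X, MeasurableSet A → Measurable fun x => m x A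

/-- Reversibility (detailed balance) of `ν` with respect to the random walk `m`. -/
def Reversible (m : X → Measure X) (ν : Measure X) : Prop :=
  ∀ A B : Set X, MeasurableSet A → MeasurableSet B →
    ∫⁻ x in A, m x B ∂ν = ∫⁻ x in B, m x A ∂ν

/-- The `m`-boundary of `Ω`. -/
def mBoundary (m : X → Measure X) (Ω : Set X) : Set X :=
  {x | x ∉ Ω ∧ 0 < m x Ω}

/-- The `m`-closure of `Ω`. -/
def mClosure (m : X → Measure X) (Ω : Set X) : Set X :=
  Ω ∪ mBoundary m Ω

/-- `D` is `m`-connected (with respect to `ν`). -/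
def mConnected (m : X → Measure X) (ν : Measure X) (D : Set X) : Prop :=
  ∀ A B : Set X, MeasurableSet A → MeasurableSet B → A ⊆ D → B ⊆ D →
    A ∪ B = D → 0 < ν A → 0 < ν B → 0 < ∫⁻ x in A, m x B ∂ν

/-- The `m`-perimeter of `Ω`. -/
noncomputable def mPerimeter (m : X → Measure X) (ν : Measure X) (Ω : Set X) : ℝ≥0∞ :=
  ∫⁻ x in Ω, m x Ωᶜ ∂ν

/-- `survival m Ω n x` is the mass of paths of `n` jumps starting at `x` that stay in `Ω`. -/
noncomputable def survival (m : X → Measure X) (Ω : Set X) : ℕ → X → ℝ≥0∞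
  | 0, _ => 1
  | n + 1, x => ∫⁻ y in Ω, survival m Ω n y ∂(m x)

/-- `gseq m ν Ω n` is the mass of paths of `n` jumps that start in `Ω` and stay in `Ω`. -/
noncomputable def gseq (m : X → Measure X) (ν : Measure X) (Ω : Set X) (n : ℕ) : ℝ≥0∞ :=
  ∫⁻ x in Ω, survival m Ω n x ∂ν

/-- The spectral `m`-heat content of `Ω` at time `t`. -/
noncomputable def heatContent (m : X → Measure X) (ν : Measure X) (Ω : Set X) (t : ℝ) : ℝ≥0∞ :=
  ∑' k : ℕ, gseq m ν Ω k * ENNReal.ofReal (Real.exp (-t) * t ^ k / (Nat.factorial k))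

/-- The nonlocal `p`-energy `∫_{Ω_m×Ω_m} |f(y) − f(x)|^p dm_x(y)dν(x)`. -/
noncomputable def energy (m : X → Measure X) (ν : Measure X) (Ω : Set X) (p : ℝ)
    (f : X → ℝ) : ℝ≥0∞ :=
  ∫⁻ x in mClosure m Ω, ∫⁻ y in mClosure m Ω, ENNReal.ofReal (|f y - f x| ^ p) ∂(m x) ∂ν

/-- `f ∈ L^p_0(Ω_m,ν)`: `f ∈ L^p(Ω_m,ν)` and `f = 0` ν-a.e. on `∂_m Ω`. -/
def InLp0 (m : X → Measure X) (ν : Measure X) (Ω : Set X) (p : ℝ) (f : X → ℝ) : Prop :=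
  MemLp f (ENNReal.ofReal p) (ν.restrict (mClosure m Ω)) ∧
    ∀ᵐ x ∂ν.restrict (mBoundary m Ω), f x = 0

/-- `Ω` satisfies a `p`-Poincaré inequality. -/
def PoincareInequality (m : X → Measure X) (ν : Measure X) (Ω : Set X) (p : ℝ) : Prop :=
  ∃ lam : ℝ, 0 < lam ∧ ∀ f : X → ℝ, InLp0 m ν Ω p f →
    ENNReal.ofReal lam * ∫⁻ x in Ω, ENNReal.ofReal (|f x| ^ p) ∂ν ≤ energy m ν Ω p f

/-- The `m`-stress function of `Ω`. -/
def IsStressFunction (m : X → Measure X) (ν : Measure X) (Ω : Set X) (f : X → ℝ) : Prop :=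
  InLp0 m ν Ω 2 f ∧ (∀ᵐ x ∂ν.restrict (mClosure m Ω), 0 ≤ f x) ∧
    ∀ᵐ x ∂ν.restrict Ω, -∫ y in mClosure m Ω, (f y - f x) ∂(m x) = 1

/-- The `p`-torsion function of `Ω`. -/
def IsPStressFunction (m : X → Measure X) (ν : Measure X) (Ω : Set X) (p : ℝ)
    (f : X → ℝ) : Prop :=
  InLp0 m ν Ω p f ∧ (∀ᵐ x ∂ν.restrict (mClosure m Ω), 0 ≤ f x) ∧
    ∀ᵐ x ∂ν.restrict Ω,
      -∫ y in mClosure m Ω, |f y - f x| ^ (p - 2) * (f y - f x) ∂(m x) = 1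

/-- The Rayleigh quotient infimum `λ_{m,p}(Ω)`. -/
noncomputable def rayleigh (m : X → Measure X) (ν : Measure X) (Ω : Set X) (p : ℝ) : ℝ≥0∞ :=
  ⨅ (f : X → ℝ) (_ : InLp0 m ν Ω p f)
    (_ : 0 < ∫⁻ x in Ω, ENNReal.ofReal (|f x| ^ p) ∂ν),
    (energy m ν Ω p f / 2) / ∫⁻ x in Ω, ENNReal.ofReal (|f x| ^ p) ∂ν

/-- The `m`-Cheeger constant `h_1^m(Ω)`. -/
noncomputable def cheeger1 (m : X → Measure X) (ν : Measure X) (Ω : Set X) : ℝ≥0∞ :=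
  ⨅ (E : Set X) (_ : MeasurableSet E) (_ : E ⊆ Ω) (_ : 0 < ν E),
    mPerimeter m ν E / ν E

/-- The `m`-`p`-Cheeger constant `h_p^m(Ω)`. -/
noncomputable def cheegerP (m : X → Measure X) (ν : Measure X) (Ω : Set X) (p : ℝ) : ℝ≥0∞ :=
  ⨅ (E : Set X) (_ : MeasurableSet E) (_ : E ⊆ Ω) (_ : 0 < ν E),
    mPerimeter m ν E / ν E ^ p

/-- The functional `F_{m,p}(f) = (1/(2p)) ∫∫ |∇f|^p − ∫_Ω f`, with values in `EReal`. -/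
noncomputable def torsionalFunctional (m : X → Measure X) (ν : Measure X) (Ω : Set X)
    (p : ℝ) (f : X → ℝ) : EReal :=
  ((energy m ν Ω p f / ENNReal.ofReal (2 * p) : ℝ≥0∞) : EReal) -
    ((∫ x in Ω, f x ∂ν : ℝ) : EReal)

end RandomWalkSpace

/-!
Since `∂_m Ω ⊆ X ∖ Ω`, the perimeter dominates `∫_Ω m_x(∂_m Ω) dν`, which is positive by
`m`-connectedness of `Ω_m` applied to the partition `Ω ∪ ∂_m Ω`; that `∂_m Ω` is not null is
exactly `ν(Ω) < ν(Ω_m)`. As each `m_x` is a probability measure,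
`P_m(Ω) + ∫_Ω m_x(Ω) dν = ν(Ω) < ∞`, and `m`-connectedness of `Ω` (with `A = B = Ω`) makes the
second summand positive.
-/

namespace RandomWalkSpace

variable {X : Type*} [MeasurableSpace X] {m : X → Measure X} {ν : Measure X} {Ω : Set X}

theorem mBoundary_subset_compl : mBoundary m Ω ⊆ Ωᶜ := fun _ hx => hx.1

theorem measurableSet_mBoundary (hΩ : MeasurableSet Ω) (hmΩ : Measurable fun x => m x Ω) :
    MeasurableSet (mBoundary m Ω) :=
  hΩ.compl.inter (hmΩ measurableSet_Ioi)

theorem measure_mBoundary_pos (h : ν Ω < ν (mClosure m Ω)) : 0 < ν (mBoundary m Ω) := by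
  refine pos_iff_ne_zero.2 fun hzero => h.not_ge ?_
  calc ν (mClosure m Ω) ≤ ν Ω + ν (mBoundary m Ω) := measure_union_le _ _
    _ = ν Ω := by rw [hzero, add_zero]

theorem mPerimeter_add_lintegral_measure_self (hm : IsRandomWalk m) (hΩ : MeasurableSet Ω) :
    mPerimeter m ν Ω + ∫⁻ x in Ω, m x Ω ∂ν = ν Ω := by
  have hsplit (x : X) : m x Ωᶜ + m x Ω = 1 := by
    have := hm.1 x
    rw [add_comm, measure_add_measure_compl hΩ, measure_univ]
  rw [mPerimeter, ← lintegral_add_left (hm.2 _ hΩ.compl)]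
  simp only [hsplit, lintegral_one, Measure.restrict_apply_univ]

theorem mConnected.lintegral_measure_self_pos {D : Set X} (hD : mConnected m ν D)
    (hDmeas : MeasurableSet D) (hpos : 0 < ν D) : 0 < ∫⁻ x in D, m x D ∂ν :=
  hD D D hDmeas hDmeas le_rfl le_rfl (Set.union_self D) hpos hpos

theorem mPerimeter_pos (hm : IsRandomWalk m) (hΩ : MeasurableSet Ω)
    (hconnm : mConnected m ν (mClosure m Ω)) (hpos : 0 < ν Ω)
    (hbd : 0 < ν (mBoundary m Ω)) : 0 < mPerimeter m ν Ω :=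
  calc 0 < ∫⁻ x in Ω, m x (mBoundary m Ω) ∂ν :=
        hconnm Ω _ hΩ (measurableSet_mBoundary hΩ (hm.2 Ω hΩ)) Set.subset_union_left
          Set.subset_union_right rfl hpos hbd
    _ ≤ mPerimeter m ν Ω := lintegral_mono fun _ => measure_mono mBoundary_subset_compl

theorem mPerimeter_lt_measure (hm : IsRandomWalk m) (hΩ : MeasurableSet Ω)
    (hconn : mConnected m ν Ω) (hpos : 0 < ν Ω) (hfin : ν Ω ≠ ⊤) :
    mPerimeter m ν Ω < ν Ω := by
  have hsum := mPerimeter_add_lintegral_measure_self (ν := ν) hm hΩ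
  have hfinP : mPerimeter m ν Ω ≠ ⊤ := ne_top_of_le_ne_top hfin (hsum ▸ le_self_add)
  calc mPerimeter m ν Ω < mPerimeter m ν Ω + ∫⁻ x in Ω, m x Ω ∂ν :=
        ENNReal.lt_add_right hfinP (hconn.lintegral_measure_self_pos hΩ hpos).ne'
    _ = ν Ω := hsum

end RandomWalkSpace

open RandomWalkSpace in
theorem perimeter_pos_lt_general {X : Type*} [MeasurableSpace X]
    (m : X → Measure X) (ν : Measure X)
    (hm : RandomWalkSpace.IsRandomWalk m)
    (Ω : Set X) (hΩ : MeasurableSet Ω)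
    (hconn : RandomWalkSpace.mConnected m ν Ω)
    (hconnm : RandomWalkSpace.mConnected m ν (RandomWalkSpace.mClosure m Ω))
    (h0 : 0 < ν Ω) (h1 : ν Ω < ν (RandomWalkSpace.mClosure m Ω)) :
    0 < RandomWalkSpace.mPerimeter m ν Ω ∧ RandomWalkSpace.mPerimeter m ν Ω < ν Ω :=
  ⟨mPerimeter_pos hm hΩ hconnm h0 (measure_mBoundary_pos h1),
    mPerimeter_lt_measure hm hΩ hconn h0 h1.ne_top⟩

/-- In a reversible random walk space, if `Ω` and `Ω_m` are `m`-connected and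
`0 < ν(Ω) < ν(Ω_m) < ∞`, then `0 < P_m(Ω) < ν(Ω)`. -/
theorem perimeter_pos_lt {X : Type*} [MeasurableSpace X]
    (m : X → Measure X) (ν : Measure X) [SigmaFinite ν]
    (hm : RandomWalkSpace.IsRandomWalk m) (hrev : RandomWalkSpace.Reversible m ν)
    (Ω : Set X) (hΩ : MeasurableSet Ω)
    (hconn : RandomWalkSpace.mConnected m ν Ω)
    (hconnm : RandomWalkSpace.mConnected m ν (RandomWalkSpace.mClosure m Ω))
    (h0 : 0 < ν Ω) (h1 : ν Ω < ν (RandomWalkSpace.mClosure m Ω))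
    (h2 : ν (RandomWalkSpace.mClosure m Ω) < ⊤) :
    0 < RandomWalkSpace.mPerimeter m ν Ω ∧ RandomWalkSpace.mPerimeter m ν Ω < ν Ω :=
  perimeter_pos_lt_general m ν hm Ω hΩ hconn hconnm h0 h1
end

section
/- Let [X,B,m,ν] be a reversible random walk space and let Ω ∈ B with Ω and Ω_m m-connected and 0 < ν(Ω) < ν(Ω_m) < ∞. If f_Ω is the m-stress function of Ω, then the m-torsional rigidity satisfies T_m(Ω) = ∫_Ω f_Ω dν ≥ ν(Ω). -/
open MeasureTheory ENNReal Filter Topology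

/-!
Integrating the stress equation `f(x) m_x(Ω_m) - ∫_{Ω_m} f dm_x = 1` over `Ω` and moving the
double integral `∫_Ω ∫_{Ω_m} f(y) dm_x(y) dν(x)` across by reversibility gives
`ν(Ω) = ∫_Ω f(x) m_x(∂_mΩ) dν(x)`, because `f` vanishes on `∂_mΩ`.
Since `m_x(∂_mΩ) ≤ 1`, the right-hand side is at most `∫_Ω f dν`.
-/

namespace RandomWalkSpace

variable {X : Type*} [MeasurableSpace X] {m : X → Measure X} {ν : Measure X} {Ω : Set X}

theorem measurableSet_mBoundary_s1 (hm : IsRandomWalk m) (hΩ : MeasurableSet Ω) :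
    MeasurableSet (mBoundary m Ω) :=
  hΩ.compl.inter (measurableSet_lt measurable_const (hm.2 Ω hΩ))

theorem measurableSet_mClosure (hm : IsRandomWalk m) (hΩ : MeasurableSet Ω) :
    MeasurableSet (mClosure m Ω) :=
  hΩ.union (measurableSet_mBoundary_s1 hm hΩ)

theorem disjoint_mBoundary (m : X → Measure X) (Ω : Set X) : Disjoint Ω (mBoundary m Ω) :=
  Set.disjoint_left.mpr fun _ hx hxD => hxD.1 hx

theorem IsRandomWalk.measure_le_one (hm : IsRandomWalk m) (x : X) (A : Set X) : m x A ≤ 1 :=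
  have := hm.1 x
  prob_le_one

theorem IsRandomWalk.measurable_restrict (hm : IsRandomWalk m) {B : Set X}
    (hB : MeasurableSet B) : Measurable fun x => (m x).restrict B :=
  Measure.measurable_of_measurable_coe _ fun s hs => by
    simpa only [Measure.restrict_apply hs] using hm.2 (s ∩ B) (hs.inter hB)

theorem Reversible.bind_restrict_eq_withDensity (hm : IsRandomWalk m) (hrev : Reversible m ν)
    {A B : Set X} (hA : MeasurableSet A) (hB : MeasurableSet B) :
    (ν.restrict A).bind (fun x => (m x).restrict B) =
      (ν.restrict B).withDensity fun y => m y A := by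
  ext s hs
  rw [Measure.bind_apply hs (hm.measurable_restrict hB).aemeasurable, withDensity_apply _ hs,
    Measure.restrict_restrict hs]
  simp only [Measure.restrict_apply hs]
  exact hrev A (s ∩ B) hA (hs.inter hB)

theorem Reversible.setLIntegral_setLIntegral_swap (hm : IsRandomWalk m) (hrev : Reversible m ν)
    {A B : Set X} (hA : MeasurableSet A) (hB : MeasurableSet B) {g : X → ℝ≥0∞}
    (hg : AEMeasurable g (ν.restrict B)) :
    ∫⁻ x in A, ∫⁻ y in B, g y ∂(m x) ∂ν = ∫⁻ y in B, g y * m y A ∂ν := by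
  have hmA : AEMeasurable (fun y => m y A) (ν.restrict B) := (hm.2 A hA).aemeasurable
  have hbind := hrev.bind_restrict_eq_withDensity hm hA hB
  rw [← Measure.lintegral_bind (hm.measurable_restrict hB).aemeasurable
      (hbind ▸ hg.mono_ac (withDensity_absolutelyContinuous _ _)), hbind,
    lintegral_withDensity_eq_lintegral_mul₀ hmA hg]
  exact lintegral_congr fun y => mul_comm _ _

theorem Reversible.ae_ae_of_ae (hm : IsRandomWalk m) (hrev : Reversible m ν) {p : X → Prop}
    (h : ∀ᵐ y ∂ν, p y) : ∀ᵐ x ∂ν, ∀ᵐ y ∂(m x), p y := by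
  set N := toMeasurable ν {y | ¬p y}
  have hN : MeasurableSet N := measurableSet_toMeasurable ν _
  have hνN : ν N = 0 := by rwa [measure_toMeasurable]
  have hmN : ∫⁻ x, m x N ∂ν = 0 := by
    rw [← Measure.restrict_univ (μ := ν), hrev _ _ MeasurableSet.univ hN,
      Measure.restrict_eq_zero.mpr hνN, lintegral_zero_measure]
  filter_upwards [(lintegral_eq_zero_iff (hm.2 N hN)).mp hmN] with x hx
  exact measure_mono_null (subset_toMeasurable ν _) hx

/-- The stress equation at a single point `x`, with `μ = m_x`, `s = Ω_m` and `a = f(x)`. -/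
theorem ofReal_mul_measure_eq_one_add_setLIntegral {μ : Measure X} [IsFiniteMeasure μ]
    {s : Set X} {f : X → ℝ} {a : ℝ} (ha : 0 ≤ a) (hf : 0 ≤ᵐ[μ.restrict s] f)
    (h : -∫ y in s, (f y - a) ∂μ = 1) :
    ENNReal.ofReal a * μ s = 1 + ∫⁻ y in s, ENNReal.ofReal (f y) ∂μ := by
  have hint : Integrable (fun y => f y - a) (μ.restrict s) := by
    by_contra hnot
    rw [integral_undef hnot] at h
    norm_num at h
  have hintf : Integrable f (μ.restrict s) :=
    (hint.add (integrable_const a)).congr (ae_of_all _ fun y => sub_add_cancel (f y) a)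
  have hsplit : ∫ y in s, (f y - a) ∂μ = ∫ y in s, f y ∂μ - a * μ.real s := by
    rw [integral_sub hintf (integrable_const _), setIntegral_const, smul_eq_mul, mul_comm]
  rw [← ofReal_integral_eq_lintegral_ofReal hintf hf, ← ENNReal.ofReal_one,
    ← ENNReal.ofReal_add zero_le_one (integral_nonneg_of_ae hf), ← ofReal_measureReal,
    ← ENNReal.ofReal_mul ha]
  congr 1
  linarith

variable {f : X → ℝ}

theorem IsStressFunction.integrableOn_mClosure (hf : IsStressFunction m ν Ω f)
    (hC : ν (mClosure m Ω) < ⊤) : IntegrableOn f (mClosure m Ω) ν := by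
  have : IsFiniteMeasure (ν.restrict (mClosure m Ω)) := ⟨by rwa [Measure.restrict_apply_univ]⟩
  have hf2 : MemLp f 2 (ν.restrict (mClosure m Ω)) := by
    simpa only [ENNReal.ofReal_ofNat] using hf.1.1
  exact hf2.integrable one_le_two

theorem IsStressFunction.ofReal_mul_measure_mClosure (hm : IsRandomWalk m)
    (hrev : Reversible m ν) (hΩ : MeasurableSet Ω) (hf : IsStressFunction m ν Ω f) :
    ∀ᵐ x ∂ν.restrict Ω, ENNReal.ofReal (f x) * m x (mClosure m Ω) =
      1 + ∫⁻ y in mClosure m Ω, ENNReal.ofReal (f y) ∂(m x) := by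
  have hC := measurableSet_mClosure hm hΩ
  have hΩC : Ω ⊆ mClosure m Ω := Set.subset_union_left
  have hnonneg : ∀ᵐ y ∂ν, y ∈ mClosure m Ω → 0 ≤ f y := (ae_restrict_iff' hC).mp hf.2.1
  filter_upwards [hf.2.2, ae_restrict_of_ae_restrict_of_subset hΩC hf.2.1,
    ae_restrict_of_ae (hrev.ae_ae_of_ae hm hnonneg)] with x hx hfx hnonneg_x
  have := hm.1 x
  exact ofReal_mul_measure_eq_one_add_setLIntegral hfx ((ae_restrict_iff' hC).mpr hnonneg_x) hx

theorem IsStressFunction.measure_eq_setLIntegral_mBoundary (hm : IsRandomWalk m)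
    (hrev : Reversible m ν) (hΩ : MeasurableSet Ω) (hC : ν (mClosure m Ω) < ⊤)
    (hf : IsStressFunction m ν Ω f) :
    ν Ω = ∫⁻ x in Ω, ENNReal.ofReal (f x) * m x (mBoundary m Ω) ∂ν := by
  set g : X → ℝ≥0∞ := fun x => ENNReal.ofReal (f x)
  have hDm := measurableSet_mBoundary_s1 hm hΩ
  have hCm := measurableSet_mClosure hm hΩ
  have hΩC : Ω ⊆ mClosure m Ω := Set.subset_union_left
  have hgC : AEMeasurable g (ν.restrict (mClosure m Ω)) :=
    hf.1.1.aestronglyMeasurable.aemeasurable.ennreal_ofReal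
  have hgΩ : AEMeasurable g (ν.restrict Ω) := hgC.mono_measure (Measure.restrict_mono hΩC le_rfl)
  have hboundary : ∫⁻ y in mBoundary m Ω, g y * m y Ω ∂ν = 0 :=
    (lintegral_congr_ae (hf.1.2.mono fun y hy => by simp [g, hy])).trans lintegral_zero
  have hswap : ∫⁻ x in Ω, ∫⁻ y in mClosure m Ω, g y ∂(m x) ∂ν = ∫⁻ y in Ω, g y * m y Ω ∂ν := by
    rw [hrev.setLIntegral_setLIntegral_swap hm hΩ hCm hgC, mClosure,
      lintegral_union hDm (disjoint_mBoundary m Ω), hboundary, add_zero]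
  have hfinite : ∫⁻ x in Ω, g x * m x Ω ∂ν ≠ ⊤ := by
    refine ne_top_of_le_ne_top ((hf.integrableOn_mClosure hC).lintegral_lt_top).ne ?_
    exact lintegral_mono' (Measure.restrict_mono hΩC le_rfl)
      fun x => mul_le_of_le_one_right' (hm.measure_le_one x Ω)
  refine (ENNReal.add_right_inj hfinite).mp ?_
  calc ∫⁻ x in Ω, g x * m x Ω ∂ν + ν Ω
      = ν Ω + ∫⁻ x in Ω, ∫⁻ y in mClosure m Ω, g y ∂(m x) ∂ν := by rw [hswap, add_comm]
    _ = ∫⁻ x in Ω, (1 + ∫⁻ y in mClosure m Ω, g y ∂(m x)) ∂ν := by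
      rw [lintegral_add_left measurable_const, setLIntegral_one]
    _ = ∫⁻ x in Ω, g x * m x (mClosure m Ω) ∂ν :=
      lintegral_congr_ae ((hf.ofReal_mul_measure_mClosure hm hrev hΩ).mono fun x hx => hx.symm)
    _ = ∫⁻ x in Ω, (g x * m x Ω + g x * m x (mBoundary m Ω)) ∂ν := by
      simp only [mClosure, measure_union (disjoint_mBoundary m Ω) hDm, mul_add]
    _ = _ := lintegral_add_left' (hgΩ.mul (hm.2 Ω hΩ).aemeasurable) _

end RandomWalkSpace

theorem torsion_ge_measure_general {X : Type*} [MeasurableSpace X]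
    (m : X → Measure X) (ν : Measure X)
    (hm : RandomWalkSpace.IsRandomWalk m) (hrev : RandomWalkSpace.Reversible m ν)
    (Ω : Set X) (hΩ : MeasurableSet Ω)
    (h2 : ν (RandomWalkSpace.mClosure m Ω) < ⊤)
    (f : X → ℝ) (hf : RandomWalkSpace.IsStressFunction m ν Ω f) :
    (ν Ω).toReal ≤ ∫ x in Ω, f x ∂ν := by
  have hint : IntegrableOn f Ω ν := (hf.integrableOn_mClosure h2).mono_set Set.subset_union_left
  have hnonneg : 0 ≤ᵐ[ν.restrict Ω] f :=
    ae_restrict_of_ae_restrict_of_subset Set.subset_union_left hf.2.1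
  have hle : ν Ω ≤ ENNReal.ofReal (∫ x in Ω, f x ∂ν) :=
    calc ν Ω = ∫⁻ x in Ω, ENNReal.ofReal (f x) * m x (RandomWalkSpace.mBoundary m Ω) ∂ν :=
          hf.measure_eq_setLIntegral_mBoundary hm hrev hΩ h2
      _ ≤ ∫⁻ x in Ω, ENNReal.ofReal (f x) ∂ν :=
          lintegral_mono fun x => mul_le_of_le_one_right' (hm.measure_le_one x _)
      _ = ENNReal.ofReal (∫ x in Ω, f x ∂ν) :=
          (ofReal_integral_eq_lintegral_ofReal hint hnonneg).symm
  exact ENNReal.toReal_le_of_le_ofReal (integral_nonneg_of_ae hnonneg) hle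

/-- the `m`-torsional rigidity `T_m(Ω) = ∫_Ω f_Ω dν` satisfies `T_m(Ω) ≥ ν(Ω)`. -/
theorem torsion_ge_measure {X : Type*} [MeasurableSpace X]
    (m : X → Measure X) (ν : Measure X) [SigmaFinite ν]
    (hm : RandomWalkSpace.IsRandomWalk m) (hrev : RandomWalkSpace.Reversible m ν)
    (Ω : Set X) (hΩ : MeasurableSet Ω)
    (hconn : RandomWalkSpace.mConnected m ν Ω)
    (hconnm : RandomWalkSpace.mConnected m ν (RandomWalkSpace.mClosure m Ω))
    (h0 : 0 < ν Ω) (h1 : ν Ω < ν (RandomWalkSpace.mClosure m Ω))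
    (h2 : ν (RandomWalkSpace.mClosure m Ω) < ⊤)
    (f : X → ℝ) (hf : RandomWalkSpace.IsStressFunction m ν Ω f) :
    (ν Ω).toReal ≤ ∫ x in Ω, f x ∂ν :=
  torsion_ge_measure_general m ν hm hrev Ω hΩ h2 f hf
end

section
/- Let [X,B,m,ν] be a reversible random walk space and let Ω ∈ B with Ω and Ω_m m-connected, 0 < ν(Ω) < ν(Ω_m) < ∞, and such that Ω satisfies a 2-Poincaré inequality. Then T_m(Ω) equals the maximum, over all nonzero g ∈ L²(Ω_m,ν) vanishing ν-a.e. on ∂_mΩ, of (∫_Ω g dν)² / ((1/2)∫_{Ω_m×Ω_m}|g(y) − g(x)|² dm_x(y)dν(x)); equivalently (∫_Ω g dν)² ≤ T_m(Ω) · (1/2)∫_{Ω_m×Ω_m}|g(y) − g(x)|² dm_x(y)dν(x) for every such g, with equality when g = f_Ω, the m-stress function of Ω. -/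
/-!
Since `-Δ f_Ω = 1` on `Ω` and `g` vanishes on `∂_mΩ`, we have `∫_Ω g = ⟨-Δ f_Ω, g⟩`, and
reversibility (symmetry of `dm_x(y) dν(x)` on `Ω_m × Ω_m`) turns this into the Dirichlet form
`½ ∫∫ ∇f_Ω ∇g`. Taking `g = f_Ω` gives `2 T_m(Ω) = ∫∫ |∇f_Ω|²`, and Cauchy–Schwarz in
`L²(dm_x(y) dν(x))` concludes.
-/

open MeasureTheory ENNReal Filter Topology

open ProbabilityTheory

theorem sq_integral_mul_le_integral_sq_mul_integral_sq {α : Type*} [MeasurableSpace α]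
    {μ : Measure α} {u v : α → ℝ} (hu : MemLp u 2 μ) (hv : MemLp v 2 μ) :
    (∫ x, u x * v x ∂μ) ^ 2 ≤ (∫ x, u x ^ 2 ∂μ) * ∫ x, v x ^ 2 ∂μ := by
  have inner_toLp : ∀ {a b : α → ℝ} (ha : MemLp a 2 μ) (hb : MemLp b 2 μ),
      inner ℝ ha.toLp hb.toLp = ∫ x, a x * b x ∂μ := fun ha hb => by
    rw [L2.inner_def]
    refine integral_congr_ae ?_
    filter_upwards [ha.coeFn_toLp, hb.coeFn_toLp] with x hxa hxb
    rw [hxa, hxb, Real.inner_apply]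
  have h := real_inner_mul_inner_self_le hu.toLp hv.toLp
  rw [inner_toLp hu hv, inner_toLp hu hu, inner_toLp hv hv] at h
  simpa only [sq] using h

theorem MeasureTheory.Measure.lintegral_compProd₀ {α β : Type*} [MeasurableSpace α]
    [MeasurableSpace β] {μ : Measure α} [SFinite μ] {κ : Kernel α β} [IsSFiniteKernel κ]
    {F : α × β → ℝ≥0∞} (hF : AEMeasurable F (μ ⊗ₘ κ)) :
    ∫⁻ z, F z ∂(μ ⊗ₘ κ) = ∫⁻ a, ∫⁻ b, F (a, b) ∂(κ a) ∂μ := by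
  rw [Measure.compProd, Kernel.lintegral_compProd₀ _ _ _ hF]
  simp

section SymmetricMeasure

variable {α E : Type*} [MeasurableSpace α] [NormedAddCommGroup E] {π : Measure (α × α)}
  {μ : Measure α}

theorem map_snd_eq_map_fst_of_map_swap (hπ : π.map Prod.swap = π) :
    π.map Prod.snd = π.map Prod.fst := by
  conv_lhs => rw [← hπ]
  rw [Measure.map_map measurable_snd measurable_swap]
  rfl

theorem MeasureTheory.MemLp.comp_fst_of_map_fst_le {p : ℝ≥0∞} {u : α → E}
    (hπμ : π.map Prod.fst ≤ μ) (hu : MemLp u p μ) : MemLp (fun z => u z.1) p π := by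
  have h := hu.mono_measure hπμ
  exact (memLp_map_measure_iff h.aestronglyMeasurable measurable_fst.aemeasurable).mp h

theorem MeasureTheory.MemLp.comp_snd_of_map_fst_le {p : ℝ≥0∞} {u : α → E}
    (hπ : π.map Prod.swap = π) (hπμ : π.map Prod.fst ≤ μ) (hu : MemLp u p μ) :
    MemLp (fun z => u z.2) p π := by
  have h := hu.mono_measure (map_snd_eq_map_fst_of_map_swap hπ ▸ hπμ)
  exact (memLp_map_measure_iff h.aestronglyMeasurable measurable_snd.aemeasurable).mp h

theorem MeasureTheory.MemLp.sub_of_map_fst_le {p : ℝ≥0∞} {u : α → E}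
    (hπ : π.map Prod.swap = π) (hπμ : π.map Prod.fst ≤ μ) (hu : MemLp u p μ) :
    MemLp (fun z => u z.2 - u z.1) p π :=
  (hu.comp_snd_of_map_fst_le hπ hπμ).sub (hu.comp_fst_of_map_fst_le hπμ)

theorem two_mul_integral_mul_sub_of_map_swap (hπ : π.map Prod.swap = π) {f g : α → ℝ}
    (hint : Integrable (fun z => g z.1 * (f z.1 - f z.2)) π) :
    2 * ∫ z, g z.1 * (f z.1 - f z.2) ∂π = ∫ z, (f z.2 - f z.1) * (g z.2 - g z.1) ∂π := by
  have hswap : MeasurePreserving (MeasurableEquiv.prodComm : α × α ≃ᵐ α × α) π π :=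
    ⟨measurable_swap, hπ⟩
  have hint' : Integrable (fun z => g z.2 * (f z.2 - f z.1)) π :=
    hswap.integrable_comp_emb MeasurableEquiv.prodComm.measurableEmbedding |>.mpr hint
  calc 2 * ∫ z, g z.1 * (f z.1 - f z.2) ∂π
      = ∫ z, g z.1 * (f z.1 - f z.2) ∂π + ∫ z, g z.2 * (f z.2 - f z.1) ∂π := by
        rw [two_mul, ← hswap.integral_comp' (fun z => g z.1 * (f z.1 - f z.2))]
        rfl
    _ = ∫ z, (f z.2 - f z.1) * (g z.2 - g z.1) ∂π := by
        rw [← integral_add hint hint']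
        congr 1 with z
        ring

end SymmetricMeasure

section ReversibleKernel

variable {X : Type*} [MeasurableSpace X] {κ : Kernel X X} {ν : Measure X} {D : Set X}

noncomputable def edgeMeasure (κ : Kernel X X) (ν : Measure X) (hD : MeasurableSet D) :
    Measure (X × X) :=
  ν.restrict D ⊗ₘ κ.restrict hD

theorem edgeMeasure_prod [SFinite ν] [IsSFiniteKernel κ] (hD : MeasurableSet D) {s t : Set X}
    (hs : MeasurableSet s) (ht : MeasurableSet t) :
    edgeMeasure κ ν hD (s ×ˢ t) = ∫⁻ x in s ∩ D, κ x (t ∩ D) ∂ν := by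
  rw [edgeMeasure, Measure.compProd_apply_prod hs ht, Measure.restrict_restrict hs]
  simp only [Kernel.restrict_apply' _ _ _ ht]

theorem map_fst_edgeMeasure_le [SFinite ν] [IsMarkovKernel κ] (hD : MeasurableSet D) :
    (edgeMeasure κ ν hD).map Prod.fst ≤ ν.restrict D := by
  refine Measure.le_iff.mpr fun s hs => ?_
  rw [Measure.map_apply measurable_fst hs, ← Set.prod_univ, edgeMeasure_prod hD hs .univ,
    Measure.restrict_apply hs]
  calc ∫⁻ x in s ∩ D, κ x (Set.univ ∩ D) ∂ν ≤ ∫⁻ _ in s ∩ D, 1 ∂ν :=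
        lintegral_mono fun x => prob_le_one
    _ = ν (s ∩ D) := setLIntegral_one _

theorem map_swap_edgeMeasure [SigmaFinite ν] [IsMarkovKernel κ]
    (hrev : RandomWalkSpace.Reversible κ ν) (hD : MeasurableSet D) :
    (edgeMeasure κ ν hD).map Prod.swap = edgeMeasure κ ν hD := by
  set S := spanningSets (ν.restrict D)
  have hrect : ∀ s t, MeasurableSet s → MeasurableSet t →
      (edgeMeasure κ ν hD).map Prod.swap (s ×ˢ t) = edgeMeasure κ ν hD (t ×ˢ s) := by
    intro s t hs ht
    rw [Measure.map_apply measurable_swap (hs.prod ht), Set.preimage_swap_prod]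
  refine Measure.ext_of_generateFrom_of_iUnion _ (fun n => S n ×ˢ S n) generateFrom_prod.symm
    isPiSystem_prod ?_ (fun n => Set.mem_image2_of_mem (measurableSet_spanningSets _ n)
      (measurableSet_spanningSets _ n)) (fun n => ?_) ?_
  · rw [Set.iUnion_prod_of_monotone (monotone_spanningSets _) (monotone_spanningSets _),
      iUnion_spanningSets, Set.univ_prod_univ]
  · have hS := measurableSet_spanningSets (ν.restrict D) n
    rw [hrect _ _ hS hS]
    refine ne_top_of_le_ne_top (measure_spanningSets_lt_top (ν.restrict D) n).ne ?_
    calc edgeMeasure κ ν hD (S n ×ˢ S n) ≤ edgeMeasure κ ν hD (Prod.fst ⁻¹' S n) :=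
          measure_mono fun z hz => hz.1
      _ ≤ ν.restrict D (S n) := by
          rw [← Measure.map_apply measurable_fst hS]
          exact Measure.le_iff'.mp (map_fst_edgeMeasure_le hD) _
  · rintro _ ⟨s, hs, t, ht, rfl⟩
    rw [hrect _ _ hs ht, edgeMeasure_prod hD ht hs, edgeMeasure_prod hD hs ht]
    exact hrev _ _ (ht.inter hD) (hs.inter hD)

end ReversibleKernel

namespace RandomWalkSpace

variable {X : Type*} [MeasurableSpace X] {m : X → Measure X} {κ : Kernel X X} {ν : Measure X}
  {Ω : Set X} {f g u : X → ℝ}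

theorem IsRandomWalk.exists_markovKernel (hm : IsRandomWalk m) :
    ∃ κ : Kernel X X, IsMarkovKernel κ ∧ ⇑κ = m :=
  ⟨⟨m, Measure.measurable_of_measurable_coe _ hm.2⟩, ⟨hm.1⟩, rfl⟩

theorem measurableSet_mClosure_s2 (κ : Kernel X X) (hΩ : MeasurableSet Ω) :
    MeasurableSet (mClosure κ Ω) :=
  hΩ.union (hΩ.compl.inter (κ.measurable_coe hΩ measurableSet_Ioi))

theorem subset_mClosure : Ω ⊆ mClosure m Ω :=
  Set.subset_union_left

theorem InLp0.memLp_two (hu : InLp0 m ν Ω 2 u) : MemLp u 2 (ν.restrict (mClosure m Ω)) := by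
  simpa only [ENNReal.ofReal_ofNat] using hu.1

variable [SigmaFinite ν] [IsMarkovKernel κ]

theorem energy_two_eq (hrev : Reversible κ ν) (hΩ : MeasurableSet Ω)
    (hu : MemLp u 2 (ν.restrict (mClosure κ Ω))) :
    energy κ ν Ω 2 u =
      ENNReal.ofReal
        (∫ z, (u z.2 - u z.1) ^ 2 ∂edgeMeasure κ ν (measurableSet_mClosure_s2 κ hΩ)) := by
  have hC := measurableSet_mClosure_s2 κ hΩ
  have hgrad := hu.sub_of_map_fst_le (map_swap_edgeMeasure hrev hC) (map_fst_edgeMeasure_le hC)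
  rw [ofReal_integral_eq_lintegral_ofReal hgrad.integrable_sq
    (Eventually.of_forall fun _ => sq_nonneg _), edgeMeasure,
    Measure.lintegral_compProd₀
      (hgrad.aestronglyMeasurable.aemeasurable.pow_const 2).ennreal_ofReal]
  simp only [energy, Kernel.restrict_apply, Real.rpow_two, sq_abs]

theorem IsStressFunction.two_mul_setIntegral_eq (hrev : Reversible κ ν) (hΩ : MeasurableSet Ω)
    (hf : IsStressFunction κ ν Ω f) (hg : InLp0 κ ν Ω 2 g) :
    2 * ∫ x in Ω, g x ∂ν =
      ∫ z, (f z.2 - f z.1) * (g z.2 - g z.1) ∂edgeMeasure κ ν (measurableSet_mClosure_s2 κ hΩ) := by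
  have hC := measurableSet_mClosure_s2 κ hΩ
  have hsym := map_swap_edgeMeasure hrev hC
  have hint : Integrable (fun z => g z.1 * (f z.1 - f z.2)) (edgeMeasure κ ν hC) := by
    have hfst := map_fst_edgeMeasure_le (κ := κ) (ν := ν) hC
    exact (hg.memLp_two.comp_fst_of_map_fst_le hfst).integrable_mul
      ((hf.1.memLp_two.comp_fst_of_map_fst_le hfst).sub
        (hf.1.memLp_two.comp_snd_of_map_fst_le hsym hfst))
  have hlaplace : ∀ᵐ x ∂ν.restrict (mClosure κ Ω),
      g x * ∫ y in mClosure κ Ω, (f x - f y) ∂κ x = Ω.indicator g x := by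
    refine (ae_restrict_union_iff _ _ _).mpr ⟨?_, ?_⟩
    · filter_upwards [hf.2.2, ae_restrict_mem hΩ] with x hx hxΩ
      have hΔ : ∫ y in mClosure κ Ω, (f x - f y) ∂κ x = 1 := by
        rw [← hx, ← integral_neg]
        simp only [neg_sub]
      rw [hΔ, mul_one, Set.indicator_of_mem hxΩ]
    · filter_upwards [hg.2] with x hx
      rw [hx, zero_mul, Set.indicator_apply_eq_zero.mpr fun _ => hx]
  rw [← two_mul_integral_mul_sub_of_map_swap hsym hint, edgeMeasure,
    Measure.integral_compProd hint]
  simp only [integral_const_mul, Kernel.restrict_apply]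
  rw [integral_congr_ae hlaplace, integral_indicator hΩ,
    Measure.restrict_restrict_of_subset subset_mClosure]

end RandomWalkSpace

open RandomWalkSpace in
theorem torsion_variational_general {X : Type*} [MeasurableSpace X]
    (m : X → Measure X) (ν : Measure X) [SigmaFinite ν]
    (hm : RandomWalkSpace.IsRandomWalk m) (hrev : RandomWalkSpace.Reversible m ν)
    (Ω : Set X) (hΩ : MeasurableSet Ω)
    (f : X → ℝ) (hf : RandomWalkSpace.IsStressFunction m ν Ω f) :
    (∀ g : X → ℝ, RandomWalkSpace.InLp0 m ν Ω 2 g →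
      ENNReal.ofReal ((∫ x in Ω, g x ∂ν) ^ 2) ≤
        ENNReal.ofReal (∫ x in Ω, f x ∂ν) * (RandomWalkSpace.energy m ν Ω 2 g / 2)) ∧
    ENNReal.ofReal ((∫ x in Ω, f x ∂ν) ^ 2) =
      ENNReal.ofReal (∫ x in Ω, f x ∂ν) * (RandomWalkSpace.energy m ν Ω 2 f / 2) := by
  obtain ⟨κ, _, rfl⟩ := hm.exists_markovKernel
  set π := edgeMeasure κ ν (measurableSet_mClosure_s2 κ hΩ)
  set T := ∫ x in Ω, f x ∂ν
  have hT : 2 * T = ∫ z, (f z.2 - f z.1) ^ 2 ∂π := by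
    simpa only [sq] using hf.two_mul_setIntegral_eq hrev hΩ hf.1
  have hT_nonneg : 0 ≤ T := by
    have : 0 ≤ ∫ z, (f z.2 - f z.1) ^ 2 ∂π := integral_nonneg fun _ => sq_nonneg _
    linarith
  have hscale : ∀ b : ℝ,
      ENNReal.ofReal T * (ENNReal.ofReal b / 2) = ENNReal.ofReal (T * (b / 2)) := fun b => by
    rw [ENNReal.ofReal_mul hT_nonneg, ENNReal.ofReal_div_of_pos two_pos, ENNReal.ofReal_ofNat]
  have hgrad : ∀ {u}, InLp0 κ ν Ω 2 u → MemLp (fun z => u z.2 - u z.1) 2 π := fun hu =>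
    hu.memLp_two.sub_of_map_fst_le (map_swap_edgeMeasure hrev _) (map_fst_edgeMeasure_le _)
  refine ⟨fun g hg => ?_, ?_⟩
  · rw [energy_two_eq hrev hΩ hg.memLp_two, hscale]
    refine ENNReal.ofReal_le_ofReal ?_
    have hcs := sq_integral_mul_le_integral_sq_mul_integral_sq (hgrad hf.1) (hgrad hg)
    rw [← hf.two_mul_setIntegral_eq hrev hΩ hg, ← hT] at hcs
    linarith
  · rw [energy_two_eq hrev hΩ hf.1.memLp_two, ← hT, hscale]
    ring_nf

/-- variational characterization of the `m`-torsional rigidity: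
`(∫_Ω g dν)² ≤ T_m(Ω) · (1/2)∫∫|∇g|²` for every `g ∈ L²_0(Ω_m,ν)`, with equality at the
`m`-stress function `f_Ω`. -/
theorem torsion_variational {X : Type*} [MeasurableSpace X]
    (m : X → Measure X) (ν : Measure X) [SigmaFinite ν]
    (hm : RandomWalkSpace.IsRandomWalk m) (hrev : RandomWalkSpace.Reversible m ν)
    (Ω : Set X) (hΩ : MeasurableSet Ω)
    (hconn : RandomWalkSpace.mConnected m ν Ω)
    (hconnm : RandomWalkSpace.mConnected m ν (RandomWalkSpace.mClosure m Ω))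
    (h0 : 0 < ν Ω) (h1 : ν Ω < ν (RandomWalkSpace.mClosure m Ω))
    (h2 : ν (RandomWalkSpace.mClosure m Ω) < ⊤)
    (hpoinc : RandomWalkSpace.PoincareInequality m ν Ω 2)
    (f : X → ℝ) (hf : RandomWalkSpace.IsStressFunction m ν Ω f) :
    (∀ g : X → ℝ, RandomWalkSpace.InLp0 m ν Ω 2 g →
      ENNReal.ofReal ((∫ x in Ω, g x ∂ν) ^ 2) ≤
        ENNReal.ofReal (∫ x in Ω, f x ∂ν) * (RandomWalkSpace.energy m ν Ω 2 g / 2)) ∧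
    ENNReal.ofReal ((∫ x in Ω, f x ∂ν) ^ 2) =
      ENNReal.ofReal (∫ x in Ω, f x ∂ν) * (RandomWalkSpace.energy m ν Ω 2 f / 2) :=
  torsion_variational_general m ν hm hrev Ω hΩ f hf
end
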